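/- Let X, X_1, X_2, ... be i.i.d. random vectors in ℝ^d whose common law has a density lower bounded by a constant C_input > 0 on its support, let x be in the support of X, and let k_n = ⌊n^β⌋ with 0 < β < 1. Then the k_{n+1}-th order statistic ‖X−x‖_{(k_{n+1},n)} of the sample (‖X_1−x‖,...,‖X_n−x‖) converges to 0 almost surely as n → ∞. -/

import Mathlib

/-!
Fix `ε > 0`. By the strong law of large numbers applied to the indicators of `Xᵢ ∈ B̄(x, ε)`, the
fraction of the first `n` sample points lying in the closed ball `B̄(x, ε)` tends almost surely
to `μ(B̄(x, ε))`, which is positive because `x` is in the support. Since `k_{n+1} / n → 0` for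
`β < 1`, eventually at least `k_{n+1}` of them lie in that ball, i.e. the `k_{n+1}`-th order
statistic is at most `ε`. Intersecting these almost sure events over `ε = 1/(m+1)` gives the claim.
-/

open MeasureTheory ProbabilityTheory Filter

/-- The `k`-th order statistic of the family `(v i)_{i ∈ s}` : the smallest `t` such that at
least `k` of the values `v i`, `i ∈ s`, are `≤ t`. -/
noncomputable def orderStat (s : Finset ℕ) (v : ℕ → ℝ) (k : ℕ) : ℝ :=
  sInf {t : ℝ | k ≤ (s.filter (fun i => v i ≤ t)).card}

open Topology Finset

section OrderStat

variable (s : Finset ℕ) (v : ℕ → ℝ) {k : ℕ}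

lemma orderStat_nonneg (hv : ∀ i, 0 ≤ v i) : 0 ≤ orderStat s v k := by
  rcases k.eq_zero_or_pos with rfl | hk
  · simp [orderStat]
  · refine Real.sInf_nonneg fun t ht => ?_
    obtain ⟨i, hi⟩ := card_pos.mp (hk.trans_le ht)
    exact (hv i).trans (mem_filter.mp hi).2

-- When `k = 0` the defining set is all of `ℝ`, whose `sInf` is the junk value `0`.
lemma orderStat_le {t : ℝ} (ht : 0 ≤ t) (hk : k ≤ #{i ∈ s | v i ≤ t}) :
    orderStat s v k ≤ t := by
  by_cases hbdd : BddBelow {t : ℝ | k ≤ #{i ∈ s | v i ≤ t}}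
  · exact csInf_le hbdd hk
  · exact (Real.sInf_of_not_bddBelow hbdd).trans_le ht

lemma tendsto_orderStat_zero_of_eventually_le_card {s : ℕ → Finset ℕ} {k : ℕ → ℕ}
    (hv : ∀ i, 0 ≤ v i)
    (h : ∀ m : ℕ, ∀ᶠ n in atTop, k n ≤ #{i ∈ s n | v i ≤ 1 / (m + 1)}) :
    Tendsto (fun n => orderStat (s n) v (k n)) atTop (𝓝 0) := by
  refine tendsto_order.2 ⟨fun a ha => .of_forall fun n => ha.trans_le
    (orderStat_nonneg _ _ hv), fun ε hε => ?_⟩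
  obtain ⟨m, hm⟩ := exists_nat_one_div_lt hε
  exact (h m).mono fun n hn => (orderStat_le _ _ (by positivity) hn).trans_lt hm

end OrderStat

lemma tendsto_natFloor_rpow_succ_div_atTop {β : ℝ} (hβ : β < 1) :
    Tendsto (fun n : ℕ => (⌊((n + 1 : ℕ) : ℝ) ^ β⌋₊ : ℝ) / n) atTop (𝓝 0) := by
  have hpow : Tendsto (fun n : ℕ => ((n + 1 : ℕ) : ℝ) ^ (β - 1)) atTop (𝓝 0) := by
    have := (tendsto_rpow_neg_atTop (y := 1 - β) (by linarith)).comp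
      ((tendsto_add_atTop_iff_nat 1).2 (tendsto_natCast_atTop_atTop (R := ℝ)))
    simpa [Function.comp_def, neg_sub] using this
  have hratio : Tendsto (fun n : ℕ => ((n + 1 : ℕ) : ℝ) / n) atTop (𝓝 1) := by
    simpa [add_comm] using tendsto_add_mul_div_add_mul_atTop_nhds (1 : ℝ) 0 1 one_ne_zero
  refine squeeze_zero' (.of_forall fun n => by positivity) ?_
    (by simpa only [mul_zero] using hratio.mul hpow)
  filter_upwards [eventually_gt_atTop 0] with n hn
  calc (⌊((n + 1 : ℕ) : ℝ) ^ β⌋₊ : ℝ) / n ≤ ((n + 1 : ℕ) : ℝ) ^ β / n := by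
        gcongr; exact Nat.floor_le (by positivity)
    _ = ((n + 1 : ℕ) : ℝ) / n * ((n + 1 : ℕ) : ℝ) ^ (β - 1) := by
        rw [Real.rpow_sub_one (by positivity)]; field_simp

lemma eventually_le_of_tendsto_div {a b : ℕ → ℕ} {p : ℝ} (hp : 0 < p)
    (ha : Tendsto (fun n => (a n : ℝ) / n) atTop (𝓝 p))
    (hb : Tendsto (fun n => (b n : ℝ) / n) atTop (𝓝 0)) : ∀ᶠ n in atTop, b n ≤ a n := by
  filter_upwards [(ha.sub hb).eventually (eventually_gt_nhds (by simpa using hp)),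
    eventually_gt_atTop 0] with n hn hn0
  have hlt : (b n : ℝ) / n < a n / n := by linarith
  exact_mod_cast ((div_lt_div_iff_of_pos_right (by positivity)).mp hlt).le

open Classical in
lemma sum_range_indicator_succ_eq_card {E : Type*} (s : Set E) (y : ℕ → E) (n : ℕ) :
    ∑ i ∈ range n, s.indicator (fun _ => (1 : ℝ)) (y (i + 1)) = #{i ∈ Icc 1 n | y i ∈ s} := by
  rw [natCast_card_filter, ← Ico_add_one_right_eq_Icc, sum_Ico_eq_sum_range]
  simp [Set.indicator_apply, add_comm]

open Classical in
theorem ae_tendsto_card_filter_mem_div {Ω E : Type*} [MeasurableSpace Ω] [MeasurableSpace E]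
    {P : Measure Ω} {μ : Measure E} [IsFiniteMeasure μ] {X : ℕ → Ω → E}
    (hmeas : ∀ i, Measurable (X i)) (hlaw : ∀ i, P.map (X i) = μ)
    (hindep : Pairwise fun i j => IndepFun (X i) (X j) P) {s : Set E} (hs : MeasurableSet s) :
    ∀ᵐ ω ∂P, Tendsto (fun n : ℕ => (#{i ∈ Icc 1 n | X i ω ∈ s} : ℝ) / n) atTop
      (𝓝 (μ.real s)) := by
  set g : E → ℝ := s.indicator fun _ => 1
  have hg : Measurable g := measurable_const.indicator hs
  set Z : ℕ → Ω → ℝ := fun i => g ∘ X (i + 1)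
  have hint : Integrable (Z 0) P := by
    refine (integrable_map_measure hg.aestronglyMeasurable (hmeas 1).aemeasurable).mp ?_
    rw [hlaw, integrable_indicator_iff hs]
    exact integrableOn_const (measure_ne_top μ s)
  have hmean : P[Z 0] = μ.real s := by
    change ∫ ω, g (X 1 ω) ∂P = _
    rw [← integral_map (hmeas 1).aemeasurable hg.aestronglyMeasurable, hlaw,
      integral_indicator_const _ hs, smul_eq_mul, mul_one]
  have hslln := strong_law_ae_real Z hint
    (fun i j hij => (hindep (by omega : i + 1 ≠ j + 1)).comp hg hg)
    fun i => IdentDistrib.comp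
      ⟨(hmeas _).aemeasurable, (hmeas _).aemeasurable, by rw [hlaw, hlaw]⟩ hg
  filter_upwards [hslln] with ω hω
  rw [hmean] at hω
  convert hω using 3 with n
  exact (sum_range_indicator_succ_eq_card s (X · ω) n).symm

theorem nearest_neighbour_distance_tendsto_zero_general
    {Ω : Type*} [MeasurableSpace Ω] (P : Measure Ω)
    (d : ℕ) (Xs : ℕ → Ω → EuclideanSpace ℝ (Fin d))
    (μ : Measure (EuclideanSpace ℝ (Fin d))) [IsProbabilityMeasure μ]
    (hXsmeas : ∀ i, Measurable (Xs i))
    (hlawXs : ∀ i, Measure.map (Xs i) P = μ)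
    (hindep : iIndepFun Xs P)
    (x : EuclideanSpace ℝ (Fin d))
    (hx : ∀ u : ℝ, 0 < u → 0 < μ (Metric.ball x u))
    (β : ℝ) (hβ1 : β < 1)
    (kseq : ℕ → ℕ) (hkseq : ∀ n, kseq n = ⌊(n : ℝ) ^ β⌋₊) :
    ∀ᵐ ω ∂P, Tendsto
      (fun n => orderStat (Finset.Icc 1 n) (fun i => ‖Xs i ω - x‖) (kseq (n + 1)))
      atTop (nhds 0) := by
  have hkdiv : Tendsto (fun n : ℕ => (kseq (n + 1) : ℝ) / n) atTop (𝓝 0) := by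
    simpa only [hkseq] using tendsto_natFloor_rpow_succ_div_atTop hβ1
  have hcount (m : ℕ) : ∀ᵐ ω ∂P, ∀ᶠ n in atTop,
      kseq (n + 1) ≤ #{i ∈ Icc 1 n | ‖Xs i ω - x‖ ≤ 1 / (m + 1)} := by
    have hball : 0 < μ.real (Metric.closedBall x (1 / (m + 1))) :=
      ENNReal.toReal_pos ((hx _ (by positivity)).trans_le
        (measure_mono Metric.ball_subset_closedBall)).ne' (measure_ne_top _ _)
    filter_upwards [ae_tendsto_card_filter_mem_div hXsmeas hlawXs
      (fun i j hij => hindep.indepFun hij) Metric.isClosed_closedBall.measurableSet] with ω hω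
    simp only [Metric.mem_closedBall, dist_eq_norm] at hω
    exact eventually_le_of_tendsto_div hball hω hkdiv
  filter_upwards [ae_all_iff.2 hcount] with ω hω
  exact tendsto_orderStat_zero_of_eventually_le_card _ (fun i => norm_nonneg _) hω

/-- **Almost sure convergence of the `k_{n+1}`-th nearest-neighbour distance** (Lemma `ps`
in the paper). If `X, X₁, X₂, …` are i.i.d. random vectors of `ℝ^d` whose common law has a
density lower bounded by `C_input > 0` on its support, `x` is in the support of the law of
`X`, and `k_n = ⌊n^β⌋` with `0 < β < 1`, then `‖X-x‖_{(k_{n+1},n)} → 0` almost surely. -/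
theorem nearest_neighbour_distance_tendsto_zero
    {Ω : Type*} [MeasurableSpace Ω] (P : Measure Ω) [IsProbabilityMeasure P]
    (d : ℕ) (Xs : ℕ → Ω → EuclideanSpace ℝ (Fin d))
    (μ : Measure (EuclideanSpace ℝ (Fin d))) [IsProbabilityMeasure μ]
    (hXsmeas : ∀ i, Measurable (Xs i))
    (hlawXs : ∀ i, Measure.map (Xs i) P = μ)
    (hindep : iIndepFun Xs P)
    (f : EuclideanSpace ℝ (Fin d) → ℝ) (Cinput : ℝ) (hCinput : 0 < Cinput)
    (hdensity : μ = MeasureTheory.volume.withDensity (fun z => ENNReal.ofReal (f z)))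
    (hlower : ∀ z, f z ≠ 0 → Cinput ≤ f z)
    (x : EuclideanSpace ℝ (Fin d))
    (hx : ∀ u : ℝ, 0 < u → 0 < μ (Metric.ball x u))
    (β : ℝ) (hβ : 0 < β) (hβ1 : β < 1)
    (kseq : ℕ → ℕ) (hkseq : ∀ n, kseq n = ⌊(n : ℝ) ^ β⌋₊) :
    ∀ᵐ ω ∂P, Tendsto
      (fun n => orderStat (Finset.Icc 1 n) (fun i => ‖Xs i ω - x‖) (kseq (n + 1)))
      atTop (nhds 0) :=
  nearest_neighbour_distance_tendsto_zero_general P d Xs μ hXsmeas hlawXs hindep x hx β hβ1 kseq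
    hkseq
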